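/- Let (g_1,f_1,λ_1) and (g_2,f_2,λ_2) be spectral triples of T, with 1<p,q<∞. Then for any ε>0, P(Tf_1 − ε Tf_2) ≤ P(Tf_1 − ε^{(p-1)/(q-1)} (λ_2/λ_1)^{1/(q-1)} Tf_2). -/

import Mathlib

/-!
Put `h = f₁ - ε f₂`, so that `Tf₁ - ε Tf₂ = T h`. A Rolle-type argument shows that
`x ↦ ∫_a^x h u` changes sign at most as often as `h`: it vanishes at `a`, so on the interval
ending at each point of an alternating chain the integrand takes the sign of the primitive there.
Since `t ↦ t_{(p)}` is odd, increasing and `(p-1)`-homogeneous, `h` has the sign pattern of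
`(f₁)_{(p)} - ε^{p-1} (f₂)_{(p)} = λ₁ T*χ` with `χ = (g₁)_{(q)} - ε^{p-1} (λ₂/λ₁) (g₂)_{(q)}`,
and the mirror image of the same argument gives `P(T*χ) ≤ P(χ)`. Finally `χ` has the sign
pattern of `g₁ - c g₂ = Tf₁ - c Tf₂`, where `c^{q-1} = ε^{p-1} λ₂/λ₁`.

This needs `λ₁, λ₂ > 0`: testing the eigen-equation against `f` and integrating by parts gives
`1 = λ ‖g‖_q^q`. The integrability behind this comes from Hölder's inequality once `f` is known
to be measurable, and it is, because every primitive `x ↦ ∫_c^x φ` is measurable, whatever `φ`.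
-/

open MeasureTheory Set

/-- The Hardy-type operator `(Tf)(x) = v(x) ∫_a^x f(t) u(t) dt`. -/
noncomputable def hardyT (u v : ℝ → ℝ) (a : ℝ) (f : ℝ → ℝ) : ℝ → ℝ :=
  fun x => v x * ∫ t in a..x, f t * u t

/-- The adjoint-type operator `(T*f)(x) = u(x) ∫_x^b v(y) f(y) dy`. -/
noncomputable def hardyTstar (u v : ℝ → ℝ) (b : ℝ) (f : ℝ → ℝ) : ℝ → ℝ :=
  fun x => u x * ∫ t in x..b, v t * f t

/-- `t_{(p)} = |t|^{p-1} sgn t`. -/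
noncomputable def powSgn (p t : ℝ) : ℝ := |t| ^ (p - 1) * Real.sign t

/-- The `L_p` norm of a function on `[a,b]`. -/
noncomputable def funLpNorm (p a b : ℝ) (f : ℝ → ℝ) : ℝ :=
  (∫ t in a..b, |f t| ^ p) ^ (1 / p)

/-- A spectral triple `(g, f, λ)` : `g = Tf`, `f_{(p)} = λ T*(g_{(q)})` and `‖f‖_p = 1`. -/
def IsSpectralTriple (u v : ℝ → ℝ) (a b p q : ℝ) (g f : ℝ → ℝ) (lam : ℝ) : Prop :=
  (∀ x ∈ Set.Icc a b, g x = hardyT u v a f x) ∧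
  (∀ x ∈ Set.Icc a b, powSgn p (f x) = lam * hardyTstar u v b (fun y => powSgn q (g y)) x) ∧
  funLpNorm p a b f = 1

/-- `Z(g)`: the number of distinct zeros of `g` in the open interval `(a,b)`. -/
noncomputable def numZeros (a b : ℝ) (g : ℝ → ℝ) : ℕ∞ :=
  {x ∈ Set.Ioo a b | g x = 0}.encard

/-- `P(f)`: the number of sign changes of `f` in the open interval `(a,b)`. -/
noncomputable def numSignChanges (a b : ℝ) (f : ℝ → ℝ) : ℕ∞ :=
  ⨆ n ∈ {n : ℕ | ∃ x : Fin (n + 1) → ℝ, StrictMono x ∧ (∀ i, x i ∈ Set.Ioo a b) ∧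
      ∀ i : Fin n, f (x i.castSucc) * f (x i.succ) < 0}, (n : ℕ∞)

/-- The set `sp_n(T,p,q)` of spectral numbers whose spectral function has `n` zeros. -/
def spSet (u v : ℝ → ℝ) (a b p q : ℝ) (n : ℕ) : Set ℝ :=
  {lam | ∃ g f, IsSpectralTriple u v a b p q g f lam ∧ numZeros a b g = (n : ℕ∞)}

/-- The Kolmogorov width `d_n(T)`. -/
noncomputable def kolmogorovWidth (u v : ℝ → ℝ) (a b p q : ℝ) (n : ℕ) : ℝ :=
  ⨅ φ : Fin n → (ℝ → ℝ), ⨆ f ∈ {f : ℝ → ℝ | funLpNorm p a b f ≤ 1},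
    ⨅ c : Fin n → ℝ, funLpNorm q a b (fun x => hardyT u v a f x - ∑ i, c i * φ i x)

/-- The Bernstein width `b_n(T)`. -/
noncomputable def bernsteinWidth (u v : ℝ → ℝ) (a b p q : ℝ) (n : ℕ) : ℝ :=
  ⨆ φ ∈ {φ : Fin (n + 1) → (ℝ → ℝ) |
      LinearIndependent ℝ (fun i => hardyT u v a (φ i))},
    ⨅ c ∈ {c : Fin (n + 1) → ℝ | c ≠ 0},
      funLpNorm q a b (hardyT u v a (fun x => ∑ i, c i * φ i x)) /
        funLpNorm p a b (fun x => ∑ i, c i * φ i x)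

/-- The approximation number `a_n(T)`: distance to linear maps of rank at most `n-1`. -/
noncomputable def approxNumber (u v : ℝ → ℝ) (a b p q : ℝ) (n : ℕ) : ℝ :=
  ⨅ F ∈ {F : (ℝ → ℝ) →ₗ[ℝ] (ℝ → ℝ) |
      Module.rank ℝ (LinearMap.range F) ≤ ((n - 1 : ℕ) : Cardinal)},
    ⨆ f ∈ {f : ℝ → ℝ | funLpNorm p a b f ≤ 1},
      funLpNorm q a b (fun x => hardyT u v a f x - F f x)

/-- The constant `c_{pq}`, with the Beta function expressed via the Gamma function. -/
noncomputable def cpq (p p' q : ℝ) : ℝ :=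
  (p' ^ (1 / q) * q ^ (1 / p') * (p' + q) ^ (1 / p - 1 / q)) /
    (2 * (Real.Gamma (1 / q) * Real.Gamma (1 / p') / Real.Gamma (1 / q + 1 / p')))

section PowSgn

variable {p r : ℝ}

@[simp] lemma powSgn_zero (p : ℝ) : powSgn p 0 = 0 := by simp [powSgn]

lemma powSgn_neg (p t : ℝ) : powSgn p (-t) = -powSgn p t := by
  simp [powSgn, Real.sign_neg]

lemma powSgn_of_pos {t : ℝ} (ht : 0 < t) : powSgn p t = t ^ (p - 1) := by
  simp [powSgn, abs_of_pos ht, Real.sign_of_pos ht]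

lemma powSgn_of_nonneg (hp : p ≠ 1) {t : ℝ} (ht : 0 ≤ t) : powSgn p t = t ^ (p - 1) := by
  rcases ht.eq_or_lt with rfl | ht
  · rw [powSgn_zero, Real.zero_rpow (sub_ne_zero.2 hp)]
  · exact powSgn_of_pos ht

lemma powSgn_strictMono (hp : 1 < p) : StrictMono (powSgn p) :=
  strictMono_of_odd_strictMonoOn_nonneg (powSgn_neg p) fun s hs t ht hst => by
    rw [powSgn_of_nonneg hp.ne' hs, powSgn_of_nonneg hp.ne' ht]
    exact Real.rpow_lt_rpow hs hst (sub_pos.2 hp)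

lemma measurable_powSgn (hp : 1 < p) : Measurable (powSgn p) :=
  (powSgn_strictMono hp).monotone.measurable

lemma powSgn_mul_of_pos {c : ℝ} (hc : 0 < c) (t : ℝ) :
    powSgn p (c * t) = c ^ (p - 1) * powSgn p t := by
  simp only [powSgn, abs_mul, abs_of_pos hc, Real.mul_rpow hc.le (abs_nonneg t)]
  rcases lt_trichotomy t 0 with ht | rfl | ht
  · rw [Real.sign_of_neg ht, Real.sign_of_neg (mul_neg_of_pos_of_neg hc ht)]; ring
  · simp
  · rw [Real.sign_of_pos ht, Real.sign_of_pos (mul_pos hc ht)]; ring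

lemma powSgn_powSgn (h : (p - 1) * (r - 1) = 1) (t : ℝ) : powSgn r (powSgn p t) = t := by
  have key : ∀ s, 0 < s → powSgn r (powSgn p s) = s := fun s hs => by
    rw [powSgn_of_pos hs, powSgn_of_pos (Real.rpow_pos_of_pos hs _), ← Real.rpow_mul hs.le, h,
      Real.rpow_one]
  rcases lt_trichotomy t 0 with ht | rfl | ht
  · rw [← neg_neg t, powSgn_neg, powSgn_neg, key _ (neg_pos.2 ht)]
  · simp
  · exact key t ht

lemma mul_powSgn_self (hp : p ≠ 0) (t : ℝ) : t * powSgn p t = |t| ^ p := by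
  have key : ∀ s, 0 < s → s * powSgn p s = |s| ^ p := fun s hs => by
    rw [powSgn_of_pos hs, abs_of_pos hs, mul_comm, ← Real.rpow_add_one hs.ne', sub_add_cancel]
  rcases lt_trichotomy t 0 with ht | rfl | ht
  · rw [← neg_neg t, powSgn_neg, abs_neg, neg_mul_neg, key _ (neg_pos.2 ht)]
  · simp [Real.zero_rpow hp]
  · exact key t ht

lemma abs_powSgn (hp : p ≠ 1) (t : ℝ) : |powSgn p t| = |t| ^ (p - 1) := by
  rcases le_total 0 t with ht | ht
  · rw [powSgn_of_nonneg hp ht, abs_of_nonneg ht, abs_of_nonneg (Real.rpow_nonneg ht _)]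
  · rw [← neg_neg t, powSgn_neg, abs_neg, abs_neg, powSgn_of_nonneg hp (neg_nonneg.2 ht),
      abs_of_nonneg (neg_nonneg.2 ht), abs_of_nonneg (Real.rpow_nonneg (neg_nonneg.2 ht) _)]

lemma sign_powSgn_sub_powSgn (hp : 1 < p) (s t : ℝ) :
    SignType.sign (powSgn p s - powSgn p t) = SignType.sign (s - t) := by
  have hmono := powSgn_strictMono hp
  rcases lt_trichotomy s t with hst | rfl | hst
  · rw [sign_neg (sub_neg.2 hst), sign_neg (sub_neg.2 (hmono hst))]
  · simp
  · rw [sign_pos (sub_pos.2 hst), sign_pos (sub_pos.2 (hmono hst))]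

end PowSgn

section SignChanges

variable {a b : ℝ} {F G : ℝ → ℝ}

def IsAlternatingChain (a b : ℝ) (F : ℝ → ℝ) {n : ℕ} (x : Fin (n + 1) → ℝ) : Prop :=
  StrictMono x ∧ (∀ i, x i ∈ Ioo a b) ∧ ∀ i : Fin n, F (x i.castSucc) * F (x i.succ) < 0

lemma numSignChanges_le_of_chain {c d : ℝ}
    (h : ∀ n (x : Fin (n + 1) → ℝ), IsAlternatingChain a b F x →
      ∃ z : Fin (n + 1) → ℝ, IsAlternatingChain c d G z) :
    numSignChanges a b F ≤ numSignChanges c d G := by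
  unfold numSignChanges
  refine iSup₂_le fun n ⟨x, hx⟩ => ?_
  exact le_iSup₂_of_le (ι := ℕ) n (h n x hx) le_rfl

lemma IsAlternatingChain.apply_ne_zero {n : ℕ} {x : Fin (n + 2) → ℝ}
    (hx : IsAlternatingChain a b F x) (i : Fin (n + 2)) : F (x i) ≠ 0 := by
  intro h0
  rcases Fin.eq_castSucc_or_eq_last i with ⟨j, rfl⟩ | rfl
  · simpa [h0] using hx.2.2 j
  · have h := hx.2.2 (Fin.last n)
    rw [Fin.succ_last, h0, mul_zero] at h
    exact h.false

lemma numSignChanges_congr_sign (h : ∀ x ∈ Ioo a b, SignType.sign (F x) = SignType.sign (G x)) :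
    numSignChanges a b F = numSignChanges a b G := by
  have key : ∀ {F G : ℝ → ℝ}, (∀ x ∈ Ioo a b, SignType.sign (F x) = SignType.sign (G x)) →
      numSignChanges a b F ≤ numSignChanges a b G := fun h =>
    numSignChanges_le_of_chain fun _ x ⟨hmono, hmem, hsign⟩ => ⟨x, hmono, hmem, fun i => by
      rw [← sign_eq_neg_one_iff, sign_mul, ← h _ (hmem _), ← h _ (hmem _), ← sign_mul,
        sign_eq_neg_one_iff]
      exact hsign i⟩
  exact le_antisymm (key h) (key fun x hx => (h x hx).symm)

lemma numSignChanges_congr (h : ∀ x ∈ Ioo a b, F x = G x) :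
    numSignChanges a b F = numSignChanges a b G :=
  numSignChanges_congr_sign fun x hx => by rw [h x hx]

lemma numSignChanges_mul_of_pos {w : ℝ → ℝ} (hw : ∀ x ∈ Ioo a b, 0 < w x) :
    numSignChanges a b (fun x => w x * F x) = numSignChanges a b F :=
  numSignChanges_congr_sign fun x hx => by rw [sign_mul, sign_pos (hw x hx), one_mul]

lemma IsAlternatingChain.comp_neg {n : ℕ} {x : Fin (n + 1) → ℝ}
    (hx : IsAlternatingChain (-b) (-a) (fun y => F (-y)) x) :
    IsAlternatingChain a b F fun i => -x i.rev := by
  obtain ⟨hmono, hmem, hsign⟩ := hx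
  refine ⟨fun i j hij => neg_lt_neg (hmono (Fin.rev_lt_rev.2 hij)), fun i => ?_, fun i => ?_⟩
  · obtain ⟨h1, h2⟩ := hmem i.rev
    exact ⟨lt_neg_of_lt_neg h2, neg_lt.1 h1⟩
  · show F (-x i.castSucc.rev) * F (-x i.succ.rev) < 0
    rw [Fin.rev_castSucc, Fin.rev_succ, mul_comm]
    exact hsign i.rev

lemma numSignChanges_comp_neg :
    numSignChanges (-b) (-a) (fun y => F (-y)) = numSignChanges a b F := by
  refine le_antisymm (numSignChanges_le_of_chain fun _ x hx => ⟨_, hx.comp_neg⟩)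
    (numSignChanges_le_of_chain fun _ x hx => ?_)
  have hx' : IsAlternatingChain (-(-a)) (-(-b)) (fun y => (fun y => F (-y)) (-y)) x := by
    simpa only [neg_neg] using hx
  exact ⟨_, hx'.comp_neg⟩

lemma numSignChanges_powSgn_sub {p c : ℝ} (hp : 1 < p) (hc : 0 < c) :
    numSignChanges a b (fun t => powSgn p (F t) - c ^ (p - 1) * powSgn p (G t)) =
      numSignChanges a b fun t => F t - c * G t :=
  numSignChanges_congr_sign fun _ _ => by
    rw [← powSgn_mul_of_pos hc, sign_powSgn_sub_powSgn hp]

end SignChanges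

section Primitive

variable {a b : ℝ} {ψ : ℝ → ℝ}

lemma exists_mul_pos_of_integral_mul_pos {s t σ : ℝ} (hst : s ≤ t)
    (h : 0 < (∫ x in s..t, ψ x) * σ) : ∃ z ∈ Ioo s t, 0 < ψ z * σ := by
  by_contra! hcon
  rw [← intervalIntegral.integral_mul_const, intervalIntegral.integral_of_le hst,
    integral_Ioc_eq_integral_Ioo] at h
  exact h.not_ge (setIntegral_nonpos measurableSet_Ioo hcon)

theorem numSignChanges_primitive_le (hψ : IntervalIntegrable ψ volume a b) :
    numSignChanges a b (fun x => ∫ t in a..x, ψ t) ≤ numSignChanges a b ψ := by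
  refine numSignChanges_le_of_chain fun n x hx => ?_
  cases n with
  | zero => exact ⟨x, hx.1, hx.2.1, finZeroElim⟩
  | succ n =>
  set A : ℝ → ℝ := fun x => ∫ t in a..x, ψ t with hA
  obtain ⟨hmono, hmem, hsign⟩ := hx
  have hint : ∀ y ∈ Icc a b, IntervalIntegrable ψ volume a y := fun y hy =>
    hψ.mono_set (uIcc_subset_uIcc_left (Icc_subset_uIcc hy))
  -- since `A a = 0`, on each `(lo j, x j)` the increment of `A` has the sign of `A (x j)`
  let lo : Fin (n + 2) → ℝ := Fin.cons a fun k => x k.castSucc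
  have hlo_mem : ∀ j, a ≤ lo j ∧ lo j < x j := Fin.cases ⟨le_rfl, (hmem 0).1⟩
    fun k => ⟨(hmem _).1.le, hmono Fin.castSucc_lt_succ⟩
  have hlo_sign : ∀ j, A (lo j) * A (x j) ≤ 0 := Fin.cases (by simp [lo, hA])
    fun k => (hsign k).le
  have hincr : ∀ j, 0 < (∫ t in lo j..x j, ψ t) * A (x j) := fun j => by
    have hxj : x j ∈ Icc a b := Ioo_subset_Icc_self (hmem j)
    rw [← intervalIntegral.integral_interval_sub_left (hint _ hxj)
      (hint _ ⟨(hlo_mem j).1, (hlo_mem j).2.le.trans hxj.2⟩)]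
    have hAx : A (x j) ≠ 0 := IsAlternatingChain.apply_ne_zero ⟨hmono, hmem, hsign⟩ j
    nlinarith [hlo_sign j, mul_self_pos.2 hAx]
  choose z hz hψz using fun j => exists_mul_pos_of_integral_mul_pos (hlo_mem j).2.le (hincr j)
  refine ⟨z, Fin.strictMono_iff_lt_succ.2 fun i => (hz _).2.trans (hz i.succ).1, fun j =>
    ⟨(hlo_mem j).1.trans_lt (hz j).1, (hz j).2.trans (hmem j).2⟩, fun i => ?_⟩
  nlinarith [hsign i, mul_pos (hψz i.castSucc) (hψz i.succ)]

theorem numSignChanges_primitive_right_le (hψ : IntervalIntegrable ψ volume a b) :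
    numSignChanges a b (fun x => ∫ t in x..b, ψ t) ≤ numSignChanges a b ψ := by
  have hψ' : IntervalIntegrable (fun t => ψ (-t)) volume (-b) (-a) :=
    ((IntervalIntegrable.iff_comp_neg (f := ψ)).mp hψ).symm
  have h := numSignChanges_primitive_le hψ'
  rw [← numSignChanges_comp_neg (F := ψ), ← numSignChanges_comp_neg]
  convert h using 3 with y
  rw [intervalIntegral.integral_comp_neg, neg_neg]

end Primitive

section PrimitiveMeasurable

variable (φ : ℝ → ℝ) (c : ℝ)

lemma ordConnected_setOf_intervalIntegrable :
    {x | IntervalIntegrable φ volume c x}.OrdConnected :=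
  ⟨fun _ hx _ hy _ hw =>
    hx.trans ((hx.symm.trans hy).mono_set (uIcc_subset_uIcc_left (Icc_subset_uIcc hw)))⟩

lemma continuousOn_primitive_setOf_intervalIntegrable :
    ContinuousOn (fun x => ∫ t in c..x, φ t) {x | IntervalIntegrable φ volume c x} := by
  set T := {x | IntervalIntegrable φ volume c x}
  have hT : ∀ x ∈ T, ∀ y ∈ T, IntervalIntegrable φ volume x y := fun _ hx _ hy =>
    hx.symm.trans hy
  have hmin : ∀ y ∈ T, min c y ∈ T := fun y hy => by
    rcases min_choice c y with h | h <;> rw [h]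
    exacts [IntervalIntegrable.refl, hy]
  have hmax : ∀ y ∈ T, max c y ∈ T := fun y hy => by
    rcases max_choice c y with h | h <;> rw [h]
    exacts [IntervalIntegrable.refl, hy]
  intro x hx
  have hseg : ∀ y ∈ T, ∀ z ∈ T,
      ContinuousWithinAt (fun x => ∫ t in c..x, φ t) (Icc y z) x := fun y hy z hz =>
    intervalIntegral.continuousWithinAt_primitive (measure_singleton x)
      (hT _ (hmin y hy) _ (hmax z hz))
  have hleft : ContinuousWithinAt (fun x => ∫ t in c..x, φ t) (T ∩ Iic x) x := by
    by_cases h : ∃ y ∈ T, y < x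
    · obtain ⟨y, hy, hyx⟩ := h
      exact (hseg y hy x hx).mono_of_mem_nhdsWithin
        (mem_nhdsWithin.2 ⟨Ioi y, isOpen_Ioi, hyx, fun w hw => ⟨le_of_lt hw.1, hw.2.2⟩⟩)
    · push Not at h
      exact continuousWithinAt_singleton.mono fun w hw => le_antisymm hw.2 (h w hw.1)
  have hright : ContinuousWithinAt (fun x => ∫ t in c..x, φ t) (T ∩ Ici x) x := by
    by_cases h : ∃ z ∈ T, x < z
    · obtain ⟨z, hz, hxz⟩ := h
      exact (hseg x hx z hz).mono_of_mem_nhdsWithin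
        (mem_nhdsWithin.2 ⟨Iio z, isOpen_Iio, hxz, fun w hw => ⟨hw.2.2, le_of_lt hw.1⟩⟩)
    · push Not at h
      exact continuousWithinAt_singleton.mono fun w hw => le_antisymm (h w hw.1) hw.2
  rw [← inter_univ T, ← Iic_union_Ici (a := x), inter_union_distrib_left]
  exact hleft.union hright

theorem measurable_primitive : Measurable fun x => ∫ t in c..x, φ t := by
  classical
  have hpiece : (fun x => ∫ t in c..x, φ t) =
      {x | IntervalIntegrable φ volume c x}.piecewise (fun x => ∫ t in c..x, φ t) 0 := by
    ext x
    by_cases hx : IntervalIntegrable φ volume c x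
    · simp [hx]
    · simp [hx, intervalIntegral.integral_undef hx]
  rw [hpiece]
  exact (continuousOn_primitive_setOf_intervalIntegrable φ c).measurable_piecewise
    continuousOn_const (ordConnected_setOf_intervalIntegrable φ c).measurableSet

end PrimitiveMeasurable

lemma integral_mul_primitive_right {a b : ℝ} {φ ψ : ℝ → ℝ}
    (hφ : IntervalIntegrable φ volume a b) (hψ : IntervalIntegrable ψ volume a b) :
    ∫ x in a..b, φ x * ∫ t in x..b, ψ t = ∫ x in a..b, (∫ t in a..x, φ t) * ψ x := by
  set A : ℝ → ℝ := fun x => ∫ t in a..x, φ t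
  set B : ℝ → ℝ := fun x => ∫ t in b..x, ψ t
  have hA := hφ.absolutelyContinuousOnInterval_intervalIntegral left_mem_uIcc
  have hB := hψ.absolutelyContinuousOnInterval_intervalIntegral right_mem_uIcc
  have hderiv : ∫ x in a..b, (deriv A x * B x + A x * deriv B x) =
      ∫ x in a..b, (φ x * B x + A x * ψ x) := by
    refine intervalIntegral.integral_congr_ae ?_
    filter_upwards [hφ.ae_hasDerivAt_integral, hψ.ae_hasDerivAt_integral] with x hφx hψx hx
    rw [(hφx (uIoc_subset_uIcc hx) a left_mem_uIcc).deriv,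
      (hψx (uIoc_subset_uIcc hx) b right_mem_uIcc).deriv]
  have hparts : ∫ x in a..b, (φ x * B x + A x * ψ x) = 0 := by
    rw [← hderiv, hA.integral_deriv_mul_eq_sub hB]
    simp
  rw [intervalIntegral.integral_add (hφ.mul_continuousOn hB.continuousOn)
    (hψ.continuousOn_mul hA.continuousOn)] at hparts
  have hsymm : ∀ x, ∫ t in x..b, ψ t = -B x := fun x => intervalIntegral.integral_symm b x
  simp only [hsymm, mul_neg, intervalIntegral.integral_neg]
  linarith

section Hardy

variable {u v h f₁ f₂ : ℝ → ℝ} {a b : ℝ}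

theorem numSignChanges_hardyT_le (hu : ∀ x ∈ Ioo a b, 0 < u x) (hv : ∀ x ∈ Ioo a b, 0 < v x)
    (hint : IntervalIntegrable (fun t => h t * u t) volume a b) :
    numSignChanges a b (hardyT u v a h) ≤ numSignChanges a b h :=
  calc numSignChanges a b (hardyT u v a h)
      = numSignChanges a b fun x => ∫ t in a..x, h t * u t := numSignChanges_mul_of_pos hv
    _ ≤ numSignChanges a b fun t => h t * u t := numSignChanges_primitive_le hint
    _ = numSignChanges a b h := by simpa only [mul_comm] using numSignChanges_mul_of_pos hu

theorem numSignChanges_hardyTstar_le (hu : ∀ x ∈ Ioo a b, 0 < u x)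
    (hv : ∀ x ∈ Ioo a b, 0 < v x) (hint : IntervalIntegrable (fun t => v t * h t) volume a b) :
    numSignChanges a b (hardyTstar u v b h) ≤ numSignChanges a b h :=
  calc numSignChanges a b (hardyTstar u v b h)
      = numSignChanges a b fun x => ∫ t in x..b, v t * h t := numSignChanges_mul_of_pos hu
    _ ≤ numSignChanges a b fun t => v t * h t := numSignChanges_primitive_right_le hint
    _ = numSignChanges a b h := numSignChanges_mul_of_pos hv

lemma hardyT_sub_const_mul {x c : ℝ}
    (h₁ : IntervalIntegrable (fun t => f₁ t * u t) volume a b)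
    (h₂ : IntervalIntegrable (fun t => f₂ t * u t) volume a b) (hx : x ∈ Icc a b) :
    hardyT u v a (fun t => f₁ t - c * f₂ t) x =
      hardyT u v a f₁ x - c * hardyT u v a f₂ x := by
  have hsub := uIcc_subset_uIcc_left (Icc_subset_uIcc hx)
  simp only [hardyT, sub_mul, mul_assoc]
  rw [intervalIntegral.integral_sub (h₁.mono_set hsub) ((h₂.mono_set hsub).const_mul c),
    intervalIntegral.integral_const_mul]
  ring

lemma hardyTstar_sub_const_mul {x c : ℝ}
    (h₁ : IntervalIntegrable (fun t => v t * f₁ t) volume a b)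
    (h₂ : IntervalIntegrable (fun t => v t * f₂ t) volume a b) (hx : x ∈ Icc a b) :
    hardyTstar u v b (fun t => f₁ t - c * f₂ t) x =
      hardyTstar u v b f₁ x - c * hardyTstar u v b f₂ x := by
  have hsub := uIcc_subset_uIcc_right (Icc_subset_uIcc hx)
  simp only [hardyTstar, mul_sub, mul_left_comm (v _) c]
  rw [intervalIntegral.integral_sub (h₁.mono_set hsub) ((h₂.mono_set hsub).const_mul c),
    intervalIntegral.integral_const_mul]
  ring

theorem numSignChanges_hardyT_sub_le (hu : ∀ x ∈ Ioo a b, 0 < u x)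
    (hv : ∀ x ∈ Ioo a b, 0 < v x) (h₁ : IntervalIntegrable (fun t => f₁ t * u t) volume a b)
    (h₂ : IntervalIntegrable (fun t => f₂ t * u t) volume a b) (c : ℝ) :
    numSignChanges a b (fun x => hardyT u v a f₁ x - c * hardyT u v a f₂ x) ≤
      numSignChanges a b fun t => f₁ t - c * f₂ t := by
  rw [numSignChanges_congr fun x hx =>
    (hardyT_sub_const_mul h₁ h₂ (Ioo_subset_Icc_self hx)).symm]
  exact numSignChanges_hardyT_le hu hv
    (by simpa only [sub_mul, mul_assoc] using h₁.sub (h₂.const_mul c))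

theorem numSignChanges_hardyTstar_sub_le (hu : ∀ x ∈ Ioo a b, 0 < u x)
    (hv : ∀ x ∈ Ioo a b, 0 < v x) (h₁ : IntervalIntegrable (fun t => v t * f₁ t) volume a b)
    (h₂ : IntervalIntegrable (fun t => v t * f₂ t) volume a b) (c : ℝ) :
    numSignChanges a b (fun x => hardyTstar u v b f₁ x - c * hardyTstar u v b f₂ x) ≤
      numSignChanges a b fun t => f₁ t - c * f₂ t := by
  rw [numSignChanges_congr fun x hx =>
    (hardyTstar_sub_const_mul h₁ h₂ (Ioo_subset_Icc_self hx)).symm]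
  exact numSignChanges_hardyTstar_le hu hv
    (by simpa only [mul_sub, mul_left_comm (v _) c] using h₁.sub (h₂.const_mul c))

lemma memLp_hardyT {P : ENNReal} (hab : a ≤ b) (hv : MemLp v P (volume.restrict (Icc a b)))
    (hfu : IntervalIntegrable (fun t => h t * u t) volume a b) :
    MemLp (hardyT u v a h) P (volume.restrict (Icc a b)) := by
  have hA : ContinuousOn (fun x => ∫ t in a..x, h t * u t) (Icc a b) := by
    simpa only [uIcc_of_le hab] using
      intervalIntegral.continuousOn_primitive_interval' hfu left_mem_uIcc
  obtain ⟨C, hC⟩ := isCompact_Icc.exists_bound_of_continuousOn hA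
  refine hv.of_le_mul (c := C) (hv.1.mul (hA.aestronglyMeasurable measurableSet_Icc)) ?_
  filter_upwards [ae_restrict_mem measurableSet_Icc] with x hx
  rw [hardyT, norm_mul, mul_comm]
  exact mul_le_mul_of_nonneg_right (hC x hx) (norm_nonneg _)

end Hardy

lemma memLp_powSgn {α : Type*} [MeasurableSpace α] {μ : Measure α} {g : α → ℝ} {q q' : ℝ}
    (hqq' : q.HolderConjugate q') (hg : MemLp g (ENNReal.ofReal q) μ) :
    MemLp (fun x => powSgn q (g x)) (ENNReal.ofReal q') μ := by
  have hq1 : 0 < q - 1 := hqq'.sub_one_pos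
  have h := hg.norm_rpow_div (ENNReal.ofReal (q - 1))
  rw [← ENNReal.ofReal_div_of_pos hq1, ← hqq'.conjugate_eq, ENNReal.toReal_ofReal hq1.le] at h
  refine h.congr_norm
    ((measurable_powSgn hqq'.lt).comp_aemeasurable hg.1.aemeasurable).aestronglyMeasurable
    (ae_of_all _ fun x => ?_)
  simp only [Real.norm_eq_abs, abs_powSgn hqq'.lt.ne',
    abs_of_nonneg (Real.rpow_nonneg (abs_nonneg _) _)]

namespace IsSpectralTriple

variable {u v g f : ℝ → ℝ} {a b p p' q lam : ℝ}

lemma aestronglyMeasurable (hp : 1 < p) (hu : AEStronglyMeasurable u (volume.restrict (Icc a b)))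
    (h : IsSpectralTriple u v a b p q g f lam) :
    AEStronglyMeasurable f (volume.restrict (Icc a b)) := by
  have hconj := Real.HolderConjugate.conjExponent hp
  have hR : Measurable fun x => ∫ t in x..b, v t * powSgn q (g t) := by
    simpa only [intervalIntegral.integral_symm b] using (measurable_primitive _ b).fun_neg
  have hT : AEMeasurable (hardyTstar u v b fun y => powSgn q (g y)) (volume.restrict (Icc a b)) :=
    hu.aemeasurable.mul hR.aemeasurable
  refine ((measurable_powSgn hconj.symm.lt).comp_aemeasurable
    (hT.const_mul lam)).aestronglyMeasurable.congr ?_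
  filter_upwards [ae_restrict_mem measurableSet_Icc] with x hx
  have hexp : (p - 1) * (p.conjExponent - 1) = 1 := by linarith [hconj.sub_one_mul_conj]
  exact (h.2.1 x hx ▸ powSgn_powSgn hexp (f x) :)

lemma integral_abs_rpow (hab : a ≤ b) (hp : 0 < p) (h : IsSpectralTriple u v a b p q g f lam) :
    ∫ t in a..b, |f t| ^ p = 1 := by
  have hnorm := h.2.2
  unfold funLpNorm at hnorm
  rw [← Real.rpow_inv_rpow (intervalIntegral.integral_nonneg hab fun t _ =>
    Real.rpow_nonneg (abs_nonneg (f t)) p) hp.ne', ← one_div, hnorm, Real.one_rpow]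

lemma memLp (hab : a ≤ b) (hp : 1 < p) (hu : AEStronglyMeasurable u (volume.restrict (Icc a b)))
    (h : IsSpectralTriple u v a b p q g f lam) :
    MemLp f (ENNReal.ofReal p) (volume.restrict (Icc a b)) := by
  have hp0 : 0 < p := zero_lt_one.trans hp
  have hint := intervalIntegral.intervalIntegrable_of_integral_ne_zero
    ((h.integral_abs_rpow hab hp0).trans_ne one_ne_zero)
  rw [intervalIntegrable_iff_integrableOn_Icc_of_le hab] at hint
  refine (integrable_norm_rpow_iff (h.aestronglyMeasurable hp hu)
    (ENNReal.ofReal_pos.2 hp0).ne' ENNReal.ofReal_ne_top).1 ?_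
  simpa only [ENNReal.toReal_ofReal hp0.le, Real.norm_eq_abs] using hint.integrable

lemma intervalIntegrable_mul_left (hab : a ≤ b) (hpp' : p.HolderConjugate p')
    (hu : MemLp u (ENNReal.ofReal p') (volume.restrict (Icc a b)))
    (h : IsSpectralTriple u v a b p q g f lam) :
    IntervalIntegrable (fun t => f t * u t) volume a b := by
  have := hpp'.ennrealOfReal
  exact (intervalIntegrable_iff_integrableOn_Icc_of_le hab).2
    ((h.memLp hab hpp'.lt hu.1).integrable_mul hu)

lemma intervalIntegrable_mul_powSgn (hab : a ≤ b) (hpp' : p.HolderConjugate p') (hq : 1 < q)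
    (hu : MemLp u (ENNReal.ofReal p') (volume.restrict (Icc a b)))
    (hv : MemLp v (ENNReal.ofReal q) (volume.restrict (Icc a b)))
    (h : IsSpectralTriple u v a b p q g f lam) :
    IntervalIntegrable (fun t => v t * powSgn q (g t)) volume a b := by
  have hqq' := Real.HolderConjugate.conjExponent hq
  have hg : MemLp g (ENNReal.ofReal q) (volume.restrict (Icc a b)) := by
    refine (memLp_hardyT hab hv (h.intervalIntegrable_mul_left hab hpp' hu)).ae_eq ?_
    filter_upwards [ae_restrict_mem measurableSet_Icc] with x hx using (h.1 x hx).symm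
  have := hqq'.ennrealOfReal
  exact (intervalIntegrable_iff_integrableOn_Icc_of_le hab).2
    (hv.integrable_mul (memLp_powSgn hqq' hg))

lemma eigenvalue_pos (hab : a < b) (hpp' : p.HolderConjugate p') (hq : 1 < q)
    (hu : MemLp u (ENNReal.ofReal p') (volume.restrict (Icc a b)))
    (hv : MemLp v (ENNReal.ofReal q) (volume.restrict (Icc a b)))
    (h : IsSpectralTriple u v a b p q g f lam) : 0 < lam := by
  have hfu := h.intervalIntegrable_mul_left hab.le hpp' hu
  have hvG := h.intervalIntegrable_mul_powSgn hab.le hpp' hq hu hv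
  have hIcc : ∀ x ∈ uIcc a b, x ∈ Icc a b := fun x hx => by rwa [uIcc_of_le hab.le] at hx
  have key : 1 = lam * ∫ x in a..b, |g x| ^ q := calc
    1 = ∫ x in a..b, |f x| ^ p := (h.integral_abs_rpow hab.le hpp'.pos).symm
    _ = ∫ x in a..b, f x * (lam * hardyTstar u v b (fun y => powSgn q (g y)) x) :=
      intervalIntegral.integral_congr fun x hx => by
        rw [← h.2.1 x (hIcc x hx), mul_powSgn_self hpp'.ne_zero]
    _ = lam * ∫ x in a..b, f x * u x * ∫ t in x..b, v t * powSgn q (g t) := by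
      rw [← intervalIntegral.integral_const_mul]
      congr 1 with x
      rw [hardyTstar]
      ring
    _ = lam * ∫ x in a..b, (∫ t in a..x, f t * u t) * (v x * powSgn q (g x)) := by
      rw [integral_mul_primitive_right hfu hvG]
    _ = lam * ∫ x in a..b, |g x| ^ q := by
      refine congrArg _ (intervalIntegral.integral_congr fun x hx => ?_)
      rw [← mul_powSgn_self (zero_lt_one.trans hq).ne', h.1 x (hIcc x hx), hardyT]
      ring
  have hnonneg : 0 ≤ ∫ x in a..b, |g x| ^ q :=
    intervalIntegral.integral_nonneg hab.le fun x _ => Real.rpow_nonneg (abs_nonneg _) _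
  by_contra! hlam
  linarith [mul_nonpos_of_nonpos_of_nonneg hlam hnonneg]

end IsSpectralTriple

theorem sign_changes_comparison
    (a b p q p' : ℝ) (u v : ℝ → ℝ)
    (hab : a < b) (hp : 1 < p) (hq : 1 < q)
    (hp' : 1 / p' = 1 - 1 / p)
    (hu : ∀ x ∈ Set.Icc a b, 0 < u x) (hv : ∀ x ∈ Set.Icc a b, 0 < v x)
    (hu' : MemLp u (ENNReal.ofReal p') (volume.restrict (Set.Icc a b)))
    (hv' : MemLp v (ENNReal.ofReal q) (volume.restrict (Set.Icc a b)))
    (g₁ f₁ g₂ f₂ : ℝ → ℝ) (lam₁ lam₂ : ℝ)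
    (h₁ : IsSpectralTriple u v a b p q g₁ f₁ lam₁)
    (h₂ : IsSpectralTriple u v a b p q g₂ f₂ lam₂)
    (ε : ℝ) (hε : 0 < ε) :
    numSignChanges a b
        (fun x => hardyT u v a f₁ x - ε * hardyT u v a f₂ x) ≤
      numSignChanges a b
        (fun x => hardyT u v a f₁ x -
          ε ^ ((p - 1) / (q - 1)) * (lam₂ / lam₁) ^ (1 / (q - 1)) *
            hardyT u v a f₂ x) := by
  have hpp' : p.HolderConjugate p' :=
    Real.holderConjugate_iff.2 ⟨hp, by rw [one_div, one_div] at hp'; linarith⟩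
  have hu₀ : ∀ x ∈ Ioo a b, 0 < u x := fun x hx => hu x (Ioo_subset_Icc_self hx)
  have hv₀ : ∀ x ∈ Ioo a b, 0 < v x := fun x hx => hv x (Ioo_subset_Icc_self hx)
  have hlam₁ := h₁.eigenvalue_pos hab hpp' hq hu' hv'
  have hlam₂ := h₂.eigenvalue_pos hab hpp' hq hu' hv'
  have hfu₁ := h₁.intervalIntegrable_mul_left hab.le hpp' hu'
  have hfu₂ := h₂.intervalIntegrable_mul_left hab.le hpp' hu'
  have hvG₁ := h₁.intervalIntegrable_mul_powSgn hab.le hpp' hq hu' hv'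
  have hvG₂ := h₂.intervalIntegrable_mul_powSgn hab.le hpp' hq hu' hv'
  set k := ε ^ (p - 1) * (lam₂ / lam₁)
  set c := ε ^ ((p - 1) / (q - 1)) * (lam₂ / lam₁) ^ (1 / (q - 1))
  have hk : lam₁ * k = ε ^ (p - 1) * lam₂ := by simp only [k]; field_simp
  have hc : 0 < c := by positivity
  have hck : c ^ (q - 1) = k := by
    have hq1 : q - 1 ≠ 0 := (sub_pos.2 hq).ne'
    rw [Real.mul_rpow (by positivity) (by positivity), ← Real.rpow_mul hε.le,
      ← Real.rpow_mul (by positivity), div_mul_cancel₀ _ hq1, one_div_mul_cancel hq1,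
      Real.rpow_one]
  calc numSignChanges a b (fun x => hardyT u v a f₁ x - ε * hardyT u v a f₂ x)
      ≤ numSignChanges a b fun t => f₁ t - ε * f₂ t :=
        numSignChanges_hardyT_sub_le hu₀ hv₀ hfu₁ hfu₂ ε
    _ = numSignChanges a b fun t => powSgn p (f₁ t) - ε ^ (p - 1) * powSgn p (f₂ t) :=
        (numSignChanges_powSgn_sub hp hε).symm
    _ = numSignChanges a b fun x => lam₁ * (hardyTstar u v b (fun y => powSgn q (g₁ y)) x -
          k * hardyTstar u v b (fun y => powSgn q (g₂ y)) x) :=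
        numSignChanges_congr fun x hx => by
          rw [h₁.2.1 x (Ioo_subset_Icc_self hx), h₂.2.1 x (Ioo_subset_Icc_self hx)]
          linear_combination hardyTstar u v b (fun y => powSgn q (g₂ y)) x * hk
    _ = numSignChanges a b fun x => hardyTstar u v b (fun y => powSgn q (g₁ y)) x -
          k * hardyTstar u v b (fun y => powSgn q (g₂ y)) x :=
        numSignChanges_mul_of_pos fun _ _ => hlam₁
    _ ≤ numSignChanges a b fun t => powSgn q (g₁ t) - k * powSgn q (g₂ t) :=
        numSignChanges_hardyTstar_sub_le hu₀ hv₀ hvG₁ hvG₂ k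
    _ = numSignChanges a b fun t => g₁ t - c * g₂ t := hck ▸ numSignChanges_powSgn_sub hq hc
    _ = _ := numSignChanges_congr fun x hx => by
          rw [h₁.1 x (Ioo_subset_Icc_self hx), h₂.1 x (Ioo_subset_Icc_self hx)]
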